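/- arXiv:1010.5489 — 2 statements merged into one kernel-verified Lean document; each statement's English description precedes it below -/
import Mathlib

section
/- Let G be a topological group acting continuously on a second countable Hausdorff topological space X, and suppose that the orbit space X/G, equipped with the quotient topology, is Hausdorff. Then every G-invariant, G-ergodic Borel probability measure μ on X is concentrated on a single G-orbit; that is, there exists x ∈ X with μ(G·x) = 1. In particular, if in addition every G-orbit is a single point on a μ-conull set (e.g. if there are no nontrivial orbits carrying invariant measures), μ is a Dirac point mass. -/
/-!
The orbit map `π : X → X/G` is invariant, so the preimage of every open set of `X/G` is an
invariant Borel set and has measure `0` or `1`. Since `X/G` is Hausdorff and, the orbit map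
being open, second countable, countably many open sets separate its points, which forces `π`
to be a.e. constant, i.e. almost every point of `X` lies in one orbit.
-/

open MeasureTheory Filter Set

theorem MeasureTheory.ae_mem_or_ae_notMem_of_measure_eq_zero_or_one {α : Type*}
    [MeasurableSpace α] {μ : Measure α} [IsProbabilityMeasure μ] {s : Set α}
    (hs : NullMeasurableSet s μ) (h : μ s = 0 ∨ μ s = 1) :
    (∀ᵐ x ∂μ, x ∈ s) ∨ ∀ᵐ x ∂μ, x ∉ s := by
  rcases h with h | h
  · exact .inr (measure_eq_zero_iff_ae_notMem.1 h)
  · exact .inl ((ae_mem_iff_measure_eq hs).2 (h.trans measure_univ.symm))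

namespace MulAction

variable {G X : Type*} [Group G] [MulAction G X]

theorem preimage_smul_preimage_orbitRel_mk (g : G) (U : Set (Quotient (orbitRel G X))) :
    (fun x : X => g • x) ⁻¹' (Quotient.mk _ ⁻¹' U) = Quotient.mk _ ⁻¹' U := by
  ext x
  simp only [mem_preimage, Quotient.sound (orbitRel_apply.2 (mem_orbit x g))]

theorem exists_ae_mem_orbit_of_invariant_measure_eq_zero_or_one
    [TopologicalSpace X] [MeasurableSpace X] [OpensMeasurableSpace X]
    [HasCountableSeparatingOn (Quotient (orbitRel G X)) IsOpen univ]
    (μ : Measure X) [IsProbabilityMeasure μ]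
    (herg : ∀ E : Set X, MeasurableSet E →
      (∀ g : G, (fun x => g • x) ⁻¹' E = E) → μ E = 0 ∨ μ E = 1) :
    ∃ x : X, ∀ᵐ y ∂μ, y ∈ orbit G x := by
  have : Nonempty X := nonempty_of_isProbabilityMeasure μ
  have : Nonempty (Quotient (orbitRel G X)) := .map (Quotient.mk _) this
  obtain ⟨q, hq⟩ := exists_eventuallyEq_const_of_forall_separating (l := ae μ)
    (f := Quotient.mk (orbitRel G X)) IsOpen fun U hU =>
      have hmeas : MeasurableSet (Quotient.mk _ ⁻¹' U) :=
        (hU.preimage continuous_quotient_mk').measurableSet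
      ae_mem_or_ae_notMem_of_measure_eq_zero_or_one hmeas.nullMeasurableSet
        (herg _ hmeas fun g => preimage_smul_preimage_orbitRel_mk g U)
  obtain ⟨x, rfl⟩ := Quotient.mk_surjective q
  exact ⟨x, hq.mono fun y hy => Quotient.exact hy⟩

end MulAction

theorem ergodic_invariant_measure_on_single_orbit_of_t2_orbitSpace_general
    {G X : Type*} [Group G] [TopologicalSpace G]
    [TopologicalSpace X] [SecondCountableTopology X]
    [MeasurableSpace X] [BorelSpace X]
    [MulAction G X] [ContinuousSMul G X]
    (hT2 : T2Space (Quotient (MulAction.orbitRel G X)))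
    (μ : Measure X) [IsProbabilityMeasure μ]
    (herg : ∀ E : Set X, MeasurableSet E →
      (∀ g : G, (fun x => g • x) ⁻¹' E = E) → μ E = 0 ∨ μ E = 1) :
    ∃ x : X, μ (MulAction.orbit G x) = 1 := by
  have := ContinuousConstSMul.secondCountableTopology (Γ := G) (T := X)
  obtain ⟨x, hx⟩ := MulAction.exists_ae_mem_orbit_of_invariant_measure_eq_zero_or_one μ herg
  exact ⟨x, (measure_congr (eventuallyEq_univ.2 hx)).trans measure_univ⟩

/-- If a topological group `G` acts continuously on a second countable Hausdorff space `X`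
and the orbit space `X/G` is Hausdorff, then every `G`-invariant `G`-ergodic Borel
probability measure on `X` is concentrated on a single `G`-orbit. -/
theorem ergodic_invariant_measure_on_single_orbit_of_t2_orbitSpace
    {G X : Type*} [Group G] [TopologicalSpace G] [IsTopologicalGroup G]
    [TopologicalSpace X] [T2Space X] [SecondCountableTopology X]
    [MeasurableSpace X] [BorelSpace X]
    [MulAction G X] [ContinuousSMul G X]
    (hT2 : T2Space (Quotient (MulAction.orbitRel G X)))
    (μ : Measure X) [IsProbabilityMeasure μ]
    (hinv : ∀ g : G, Measure.map (fun x => g • x) μ = μ)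
    (herg : ∀ E : Set X, MeasurableSet E →
      (∀ g : G, (fun x => g • x) ⁻¹' E = E) → μ E = 0 ∨ μ E = 1) :
    ∃ x : X, μ (MulAction.orbit G x) = 1 :=
  ergodic_invariant_measure_on_single_orbit_of_t2_orbitSpace_general hT2 μ herg
end

section
/- Let K be a nonarchimedean local field with residue field of cardinality q. For all positive integers N, M, d there exists a nonnegative integer m, depending only on N, d and q, with the following property: for every ball B ⊆ K^N of radius r and every polynomial map F : K^N → K^M of degree at most d, there exists t₀ ∈ B such that |F(t)| = sup_{s ∈ B} |F(s)| for every t in the ball of radius r/q^m centered at t₀. (In particular, the supremum of |F| over B is attained on a whole sub-ball of B of comparable radius.) -/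
/-!
After an affine change of variables it suffices to work on the unit polydisc, and after dividing
by the largest coefficient, with polynomials whose coefficient vector `a` has sup norm one. Such a
`p` has a positive maximum `M` of `|p|` on the polydisc, attained at some `t₀`; by continuity
`|p(t) - p(t₀)| < M` near `t₀`, so `|p(t)| = M` there by the ultrametric inequality. Perturbing
`a` by less than `M` moves every value on the polydisc by less than `M`, which keeps both the
maximum and the points where it is attained, so compactness of the unit sphere of coefficient
vectors makes the radius uniform. Local compactness of `K` gives a largest absolute value
`|u| ≤ r`: the ball of radius `r` is the ball of radius `|u|`, and `r < |x| |u|` for any fixed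
`|x| > 1`. For a polynomial map, use the coordinate whose maximum on the ball is largest.
-/

open Metric

/-- `F : K^N → K^M` is a polynomial map of (total) degree at most `d`: each of its `M`
coordinate functions is given by a polynomial in `N` variables over `K` of total degree
at most `d`. -/
def IsPolyMapOfDeg (K : Type*) [Field K] (N M d : ℕ)
    (F : (Fin N → K) → (Fin M → K)) : Prop :=
  ∃ P : Fin M → MvPolynomial (Fin N) K,
    (∀ i, (P i).totalDegree ≤ d) ∧ ∀ t i, F t i = MvPolynomial.eval t (P i)

open Filter Topology

section Ultrametric

variable {E : Type*} [SeminormedAddGroup E] [IsUltrametricDist E]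

lemma IsUltrametricDist.norm_eq_of_norm_sub_lt {x y : E} (h : ‖x - y‖ < ‖y‖) : ‖x‖ = ‖y‖ := by
  simpa [h.ne, h.le] using norm_add_eq_max_of_norm_ne_norm h.ne

lemma IsUltrametricDist.isMaxOn_norm_of_norm_sub_lt {X : Type*} {f g : X → E} {D : Set X}
    {t₀ t : X} (hmax : IsMaxOn (‖f ·‖) D t₀) (hgf : ∀ s ∈ D, ‖g s - f s‖ < ‖f t₀‖)
    (ht : t ∈ D) (hft : ‖f t - f t₀‖ < ‖f t₀‖) : IsMaxOn (‖g ·‖) D t := by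
  have hf : ‖f t‖ = ‖f t₀‖ := norm_eq_of_norm_sub_lt hft
  have hg : ‖g t‖ = ‖f t₀‖ := (norm_eq_of_norm_sub_lt ((hgf t ht).trans_eq hf.symm)).trans hf
  intro s hs
  calc ‖g s‖ = ‖g s - f s + f s‖ := by rw [sub_add_cancel]
    _ ≤ max ‖g s - f s‖ ‖f s‖ := norm_add_le_max _ _
    _ ≤ ‖g t‖ := hg ▸ max_le (hgf s hs).le (hmax hs)

end Ultrametric

lemma IsMaxOn.eq_biSup_of_nonneg {X : Type*} {f : X → ℝ} {D : Set X} {t : X} (hf : ∀ x, 0 ≤ f x)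
    (ht : t ∈ D) (h : IsMaxOn f D t) : f t = ⨆ s ∈ D, f s := by
  -- for `s ∉ D` the inner supremum is `sSup ∅ = 0`, which `hf` keeps below `f t`
  have hle : ∀ s, ⨆ _ : s ∈ D, f s ≤ f t := fun s => Real.iSup_le (fun hs => h hs) (hf t)
  refine le_antisymm ?_ (Real.iSup_le hle (hf t))
  calc f t = ⨆ _ : t ∈ D, f t := (ciSup_pos (f := fun _ => f t) ht).symm
    _ ≤ ⨆ s ∈ D, f s := le_ciSup ⟨f t, Set.forall_mem_range.mpr hle⟩ t

section IsMaxOnBall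

variable {X : Type*} [PseudoMetricSpace X]

def IsMaxOnBall (f : X → ℝ) (D : Set X) (ρ : ℝ) : Prop :=
  ∃ t₀ ∈ D, ∀ t ∈ closedBall t₀ ρ, IsMaxOn f D t

lemma IsMaxOnBall.of_const_mul {f : X → ℝ} {D : Set X} {ρ k : ℝ} (hk : 0 < k)
    (h : IsMaxOnBall (fun t => k * f t) D ρ) : IsMaxOnBall f D ρ :=
  let ⟨t₀, ht₀, hmax⟩ := h
  ⟨t₀, ht₀, fun t ht _ hs => le_of_mul_le_mul_left (hmax t ht hs) hk⟩

lemma isMaxOnBall_norm_pi {ι E : Type*} [Fintype ι] [Nonempty ι] [SeminormedAddGroup E]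
    {F : X → ι → E} {D : Set X} {ρ : ℝ} (hρ : 0 ≤ ρ)
    (h : ∀ i, IsMaxOnBall (‖F · i‖) D ρ) : IsMaxOnBall (‖F ·‖) D ρ := by
  choose t₀ ht₀ hmax using h
  obtain ⟨j, hj⟩ := Finite.exists_max fun i => ‖F (t₀ i) i‖
  refine ⟨t₀ j, ht₀ j, fun t ht s hs => ?_⟩
  have hself : ∀ i, t₀ i ∈ closedBall (t₀ i) ρ := fun i => mem_closedBall_self hρ
  calc ‖F s‖ ≤ ‖F (t₀ j) j‖ := (pi_norm_le_iff_of_nonneg (norm_nonneg _)).mpr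
        fun i => (hmax i (t₀ i) (hself i) hs).trans (hj i)
    _ ≤ ‖F t j‖ := hmax j t ht (ht₀ j)
    _ ≤ ‖F t‖ := norm_le_pi_norm (F t) j

end IsMaxOnBall

lemma exists_ne_zero_smul_mem_sphere {K ι : Type*} [NormedField K] [Fintype ι] {a : ι → K}
    (ha : a ≠ 0) : ∃ c : K, c ≠ 0 ∧ c • a ∈ sphere 0 1 := by
  obtain ⟨v, hv⟩ := Function.ne_iff.mp ha
  have : Nonempty ι := ⟨v⟩
  obtain ⟨w, hw⟩ := Finite.exists_max fun v => ‖a v‖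
  have haw : a w ≠ 0 := norm_pos_iff.mp ((norm_pos_iff.mpr hv).trans_le (hw v))
  have hnorm : ‖a‖ = ‖a w‖ :=
    le_antisymm ((pi_norm_le_iff_of_nonneg (norm_nonneg _)).mpr hw) (norm_le_pi_norm a w)
  refine ⟨(a w)⁻¹, inv_ne_zero haw, ?_⟩
  rw [mem_sphere_zero_iff_norm, norm_smul, norm_inv, hnorm,
    inv_mul_cancel₀ (norm_ne_zero_iff.mpr haw)]

lemma exists_greatest_norm_le {K : Type*} [NontriviallyNormedField K] [ProperSpace K]
    {r : ℝ} (hr : 0 < r) {x : K} (hx : 1 < ‖x‖) :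
    ∃ u : K, u ≠ 0 ∧ (∀ y : K, ‖y‖ ≤ r ↔ ‖y‖ ≤ ‖u‖) ∧ r < ‖x‖ * ‖u‖ := by
  obtain ⟨u, hu, hmax⟩ := (isCompact_closedBall (0 : K) r).exists_isMaxOn
    (nonempty_closedBall.mpr hr.le) continuous_norm.continuousOn
  obtain ⟨y, hy0, hyr⟩ := NormedField.exists_norm_lt K hr
  have hu0 : 0 < ‖u‖ := hy0.trans_le (hmax (mem_closedBall_zero_iff.mpr hyr.le))
  have hle : ∀ y : K, ‖y‖ ≤ r ↔ ‖y‖ ≤ ‖u‖ := fun y =>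
    ⟨fun hy => hmax (mem_closedBall_zero_iff.mpr hy),
      fun hy => hy.trans (mem_closedBall_zero_iff.mp hu)⟩
  refine ⟨u, norm_pos_iff.mp hu0, hle, lt_of_not_ge fun h => hx.not_ge ?_⟩
  rwa [← mul_le_iff_le_one_left hu0, ← norm_mul, ← hle, norm_mul]

lemma closedBall_pi_eq_of_forall_norm_le_iff {ι E : Type*} [Fintype ι] [SeminormedAddCommGroup E]
    {r R : ℝ} (hr : 0 ≤ r) (hR : 0 ≤ R) (h : ∀ y : E, ‖y‖ ≤ r ↔ ‖y‖ ≤ R) (c : ι → E) :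
    closedBall c r = closedBall c R := by
  ext t
  rw [mem_closedBall_iff_norm, mem_closedBall_iff_norm, pi_norm_le_iff_of_nonneg hr,
    pi_norm_le_iff_of_nonneg hR]
  simp only [h]

section Homothety

variable {K E : Type*} [NormedField K] [SeminormedAddCommGroup E] [NormedSpace K E]

lemma inv_smul_sub_mem_closedBall_iff {u : K} (hu : u ≠ 0) {c x t : E} {R : ℝ} :
    u⁻¹ • (t - c) ∈ closedBall x R ↔ t ∈ closedBall (c + u • x) (‖u‖ * R) := by
  have hu' : 0 < ‖u‖ := norm_pos_iff.mpr hu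
  have h : u⁻¹ • (t - (c + u • x)) = u⁻¹ • (t - c) - x := by
    rw [← sub_sub, smul_sub _ (t - c), inv_smul_smul₀ hu]
  rw [mem_closedBall_iff_norm, mem_closedBall_iff_norm, ← div_le_iff₀' hu', div_eq_inv_mul,
    ← norm_inv, ← norm_smul, h]

lemma IsMaxOnBall.of_comp_homothety {f : E → ℝ} {c : E} {u : K} (hu : u ≠ 0) {ρ : ℝ}
    (h : IsMaxOnBall (fun s => f (c + u • s)) (closedBall 0 1) ρ) :
    IsMaxOnBall f (closedBall c ‖u‖) (‖u‖ * ρ) := by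
  obtain ⟨s₀, hs₀, hmax⟩ := h
  have hback : ∀ t : E, c + u • (u⁻¹ • (t - c)) = t := fun t => by
    rw [smul_inv_smul₀ hu, add_sub_cancel]
  have hball : ∀ t, t ∈ closedBall c ‖u‖ ↔ u⁻¹ • (t - c) ∈ closedBall 0 1 := fun t => by
    rw [inv_smul_sub_mem_closedBall_iff hu, smul_zero, add_zero, mul_one]
  refine ⟨c + u • s₀, ?_, fun t ht y hy => ?_⟩
  · rwa [hball, add_sub_cancel_left, inv_smul_smul₀ hu]
  · have hs : u⁻¹ • (t - c) ∈ closedBall s₀ ρ := (inv_smul_sub_mem_closedBall_iff hu).mpr ht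
    simpa only [Set.mem_ofPred_eq, hback] using hmax _ hs ((hball y).mp hy)

end Homothety

namespace MvPolynomial

section Coefficients

variable {R σ τ : Type*} [CommSemiring R]

lemma totalDegree_bind₁_le {f : σ → MvPolynomial τ R} {k : ℕ} (hf : ∀ i, (f i).totalDegree ≤ k)
    (p : MvPolynomial σ R) : (bind₁ f p).totalDegree ≤ k * p.totalDegree := by
  conv_lhs => rw [p.as_sum, map_sum]
  refine totalDegree_finsetSum_le fun v hv => ?_
  rw [bind₁_monomial]
  refine (totalDegree_mul _ _).trans ?_
  rw [totalDegree_C, zero_add]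
  refine (totalDegree_finsetProd _ _).trans ?_
  calc ∑ i ∈ v.support, (f i ^ v i).totalDegree ≤ ∑ i ∈ v.support, k * v i :=
        Finset.sum_le_sum fun i _ =>
          (totalDegree_pow _ _).trans (by rw [mul_comm]; gcongr; exact hf i)
    _ = k * v.sum fun _ e => e := by rw [Finsupp.sum, Finset.mul_sum]
    _ ≤ k * p.totalDegree := Nat.mul_le_mul_left k (le_totalDegree hv)

lemma support_subset_of_totalDegree_le [Finite σ] {p : MvPolynomial σ R} {d : ℕ}
    (hp : p.totalDegree ≤ d) : p.support ⊆ (Finsupp.finite_of_degree_le d).toFinset :=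
  fun _ hv => (Set.Finite.mem_toFinset _).mpr ((le_totalDegree hv).trans hp)

variable (S : Finset (σ →₀ ℕ))

noncomputable def ofCoeffs : (S → R) →ₗ[R] MvPolynomial σ R :=
  ∑ v : S, (monomial (v : σ →₀ ℕ)).comp (LinearMap.proj v)

lemma ofCoeffs_apply (a : S → R) : ofCoeffs S a = ∑ v : S, monomial (v : σ →₀ ℕ) (a v) := by
  simp [ofCoeffs]

lemma coeff_ofCoeffs (a : S → R) (v : S) : coeff v (ofCoeffs S a) = a v := by
  classical
  rw [ofCoeffs_apply, coeff_sum, Finset.sum_eq_single v (fun w _ hw => ?_) (by simp),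
    coeff_monomial, if_pos rfl]
  rw [coeff_monomial, if_neg fun e => hw (Subtype.ext e)]

lemma coeff_ofCoeffs_of_notMem (a : S → R) {w : σ →₀ ℕ} (hw : w ∉ S) :
    coeff w (ofCoeffs S a) = 0 := by
  classical
  rw [ofCoeffs_apply, coeff_sum]
  exact Finset.sum_eq_zero fun v _ => by
    rw [coeff_monomial, if_neg fun e : (v : σ →₀ ℕ) = w => hw (e ▸ v.2)]

lemma ofCoeffs_injective : Function.Injective (ofCoeffs (R := R) S) := fun a b h =>
  _root_.funext fun v => by rw [← coeff_ofCoeffs S a, h, coeff_ofCoeffs]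

lemma ofCoeffs_coeff {p : MvPolynomial σ R} (hp : p.support ⊆ S) :
    ofCoeffs S (fun v => coeff v p) = p := by
  rw [ofCoeffs_apply, Finset.sum_coe_sort S (fun v => monomial v (coeff v p))]
  conv_rhs => rw [p.as_sum]
  exact (Finset.sum_subset hp fun v _ hv => by rw [notMem_support_iff.mp hv, monomial_zero]).symm

end Coefficients

section Evaluation

variable {K σ : Type*} [NontriviallyNormedField K] [Fintype σ]

lemma norm_eval_le_of_forall_norm_coeff_le [IsUltrametricDist K] {p : MvPolynomial σ K} {C : ℝ}
    (hC : ∀ v, ‖coeff v p‖ ≤ C) {t : σ → K} (ht : ‖t‖ ≤ 1) : ‖eval t p‖ ≤ C := by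
  rw [eval_eq']
  refine IsUltrametricDist.norm_sum_le_of_forall_le_of_nonneg ((norm_nonneg _).trans (hC 0))
    fun v _ => ?_
  have hmon : ‖∏ i, t i ^ v i‖ ≤ 1 := by
    rw [norm_prod]
    exact Finset.prod_le_one (fun _ _ => norm_nonneg _) fun i _ => by
      rw [norm_pow]; exact pow_le_one₀ (norm_nonneg _) ((norm_le_pi_norm t i).trans ht)
  rw [norm_mul]
  exact (mul_le_of_le_one_right (norm_nonneg _) hmon).trans (hC v)

lemma norm_eval_ofCoeffs_le [IsUltrametricDist K] (S : Finset (σ →₀ ℕ)) (a : S → K)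
    {t : σ → K} (ht : ‖t‖ ≤ 1) : ‖eval t (ofCoeffs S a)‖ ≤ ‖a‖ := by
  refine norm_eval_le_of_forall_norm_coeff_le (fun w => ?_) ht
  by_cases hw : w ∈ S
  · rw [show w = ((⟨w, hw⟩ : S) : σ →₀ ℕ) from rfl, coeff_ofCoeffs]
    exact norm_le_pi_norm a _
  · rw [coeff_ofCoeffs_of_notMem S a hw, norm_zero]
    exact norm_nonneg a

lemma exists_mem_closedBall_eval_ne_zero {p : MvPolynomial σ K} (hp : p ≠ 0) (x : σ → K)
    {r : ℝ} (hr : 0 < r) : ∃ t ∈ closedBall x r, eval t p ≠ 0 := by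
  by_contra! h
  refine hp (funext_set (fun i => closedBall (x i) r)
    (fun i => infinite_of_mem_nhds _ (closedBall_mem_nhds _ hr)) fun t ht => ?_)
  rw [h t (by rwa [closedBall_pi x hr.le]), map_zero]

variable [IsUltrametricDist K] [ProperSpace K]

lemma eventually_isMaxOnBall_norm_eval_ofCoeffs {S : Finset (σ →₀ ℕ)} {a : S → K} (ha : a ≠ 0) :
    ∀ᶠ z : ℝ × (S → K) in 𝓝 (0, a),
      IsMaxOnBall (fun t => ‖eval t (ofCoeffs S z.2)‖) (closedBall 0 1) z.1 := by
  set p := ofCoeffs S a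
  have hp : p ≠ 0 := (map_ne_zero_iff _ (ofCoeffs_injective S)).mpr ha
  obtain ⟨t₀, ht₀, hmax⟩ := (isCompact_closedBall (0 : σ → K) 1).exists_isMaxOn
    ⟨0, mem_closedBall_self zero_le_one⟩ (continuous_eval p).norm.continuousOn
  obtain ⟨t₁, ht₁, hne⟩ := exists_mem_closedBall_eval_ne_zero hp 0 one_pos
  have hpos : 0 < ‖eval t₀ p‖ := (norm_pos_iff.mpr hne).trans_le (hmax ht₁)
  have hnear : ∀ᶠ t in 𝓝 t₀, t ∈ closedBall 0 1 ∧ ‖eval t p - eval t₀ p‖ < ‖eval t₀ p‖ :=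
    Eventually.and ((IsUltrametricDist.isOpen_closedBall _ one_ne_zero).mem_nhds ht₀)
      (((continuous_eval p).sub continuous_const).norm.continuousAt.eventually_lt
        continuousAt_const (by simpa using hpos))
  obtain ⟨ε, hε, hball⟩ := Metric.eventually_nhds_iff_ball.mp hnear
  rw [nhds_prod_eq]
  filter_upwards [prod_mem_prod (ball_mem_nhds (0 : ℝ) hε) (ball_mem_nhds a hpos)]
  rintro ⟨δ, a'⟩ ⟨hδ, ha'⟩
  refine ⟨t₀, ht₀, fun t ht => ?_⟩
  have hδε : δ < ε := (le_abs_self δ).trans_lt (by simpa using hδ)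
  obtain ⟨htD, hclose⟩ := hball t (closedBall_subset_ball hδε ht)
  refine IsUltrametricDist.isMaxOn_norm_of_norm_sub_lt hmax (fun s hs => ?_) htD hclose
  rw [← map_sub, ← map_sub]
  exact (norm_eval_ofCoeffs_le S _ (mem_closedBall_zero_iff.mp hs)).trans_lt
    (by simpa [dist_eq_norm] using ha')

theorem exists_isMaxOnBall_norm_eval_of_support_subset (S : Finset (σ →₀ ℕ)) :
    ∃ ρ > 0, ∀ p : MvPolynomial σ K, p.support ⊆ S →
      IsMaxOnBall (fun t => ‖eval t p‖) (closedBall 0 1) ρ := by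
  have hsphere := (isCompact_sphere (0 : S → K) 1).eventually_forall_of_forall_eventually
    (x₀ := (0 : ℝ)) (P := fun δ a => IsMaxOnBall (fun t => ‖eval t (ofCoeffs S a)‖) _ δ)
    fun a ha =>
      eventually_isMaxOnBall_norm_eval_ofCoeffs (ne_zero_of_mem_sphere one_ne_zero ⟨a, ha⟩)
  obtain ⟨ρ, hρ, hρ0⟩ :=
    ((hsphere.filter_mono nhdsWithin_le_nhds).and (self_mem_nhdsWithin (s := Set.Ioi 0))).exists
  refine ⟨ρ, hρ0, fun p hp => ?_⟩
  rcases eq_or_ne p 0 with rfl | hp0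
  · exact ⟨0, mem_closedBall_self zero_le_one, fun t _ => by simpa using isMaxOn_const⟩
  set a : S → K := fun v => coeff v p
  have hpa : ofCoeffs S a = p := ofCoeffs_coeff S hp
  have ha : a ≠ 0 := fun h => hp0 (by rw [← hpa, h, map_zero])
  obtain ⟨c, hc, hca⟩ := exists_ne_zero_smul_mem_sphere ha
  have hmax := hρ _ hca
  simp only [map_smul, hpa, smul_eval, norm_mul] at hmax
  exact hmax.of_const_mul (norm_pos_iff.mpr hc)

theorem exists_isMaxOnBall_norm_eval (d : ℕ) :
    ∃ ρ > 0, ∀ p : MvPolynomial σ K, p.totalDegree ≤ d → ∀ (c : σ → K) {u : K}, u ≠ 0 →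
      IsMaxOnBall (fun t => ‖eval t p‖) (closedBall c ‖u‖) (‖u‖ * ρ) := by
  obtain ⟨ρ, hρ, hmax⟩ := exists_isMaxOnBall_norm_eval_of_support_subset (K := K)
    (Finsupp.finite_of_degree_le (σ := σ) d).toFinset
  refine ⟨ρ, hρ, fun p hp c u hu => IsMaxOnBall.of_comp_homothety hu ?_⟩
  set q := bind₁ (fun i => C (c i) + C u * X i) p with hq_def
  have hq : q.totalDegree ≤ d := by
    refine (totalDegree_bind₁_le (k := 1) (fun i => ?_) p).trans (by rwa [one_mul])
    exact (totalDegree_add _ _).trans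
      (max_le (by simp) ((totalDegree_mul _ _).trans (by simp [totalDegree_X])))
  have heval : ∀ s, eval s q = eval (c + u • s) p := fun s => by
    rw [hq_def, hom_bind₁]
    congr 1
    ext <;> simp
  simpa only [heval] using hmax q (support_subset_of_totalDegree_le hq)

end Evaluation

end MvPolynomial

theorem polymap_norm_attains_sup_on_subball_general
    {K : Type*} [NontriviallyNormedField K] [IsUltrametricDist K]
    [LocallyCompactSpace K]
    (q : ℝ) (hq : 1 < q)
    (N d : ℕ) :
    ∃ m : ℕ, ∀ M : ℕ, 0 < M →
      ∀ F : (Fin N → K) → (Fin M → K), IsPolyMapOfDeg K N M d F →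
      ∀ (c : Fin N → K) (r : ℝ), 0 < r →
      ∃ t₀ ∈ closedBall c r, ∀ t ∈ closedBall t₀ (r / q ^ m),
        ‖F t‖ = ⨆ s ∈ closedBall c r, ‖F s‖ := by
  have := ProperSpace.of_nontriviallyNormedField_of_weaklyLocallyCompactSpace K
  obtain ⟨ρ, hρ, hmax⟩ := MvPolynomial.exists_isMaxOnBall_norm_eval (K := K) (σ := Fin N) d
  obtain ⟨x, hx⟩ := NormedField.exists_one_lt_norm K
  obtain ⟨m, hm⟩ := pow_unbounded_of_one_lt (‖x‖ / ρ) hq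
  refine ⟨m, fun M hM F ⟨P, hPd, hFP⟩ c r hr => ?_⟩
  obtain rfl : F = fun t i => MvPolynomial.eval t (P i) := funext₂ hFP
  have : Nonempty (Fin M) := ⟨⟨0, hM⟩⟩
  obtain ⟨u, hu, hru, hr_lt⟩ := exists_greatest_norm_le hr hx
  have hball : closedBall c r = closedBall c ‖u‖ :=
    closedBall_pi_eq_of_forall_norm_le_iff hr.le (norm_nonneg u) hru c
  have hrad : r / q ^ m ≤ ‖u‖ * ρ := by
    rw [div_le_iff₀ (by positivity)]
    calc r ≤ ‖x‖ * ‖u‖ := hr_lt.le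
      _ ≤ q ^ m * ρ * ‖u‖ := by gcongr; exact ((div_lt_iff₀ hρ).mp hm).le
      _ = ‖u‖ * ρ * q ^ m := by ring
  obtain ⟨t₀, ht₀, hmaxF⟩ := isMaxOnBall_norm_pi (mul_nonneg (norm_nonneg u) hρ.le)
    fun i => hmax (P i) (hPd i) c hu
  have ht₀r : t₀ ∈ closedBall c r := hball ▸ ht₀
  refine ⟨t₀, ht₀r, fun t ht => ?_⟩
  have ht_mem : t ∈ closedBall c r := by
    rw [IsUltrametricDist.closedBall_eq_of_mem ht₀r]
    exact closedBall_subset_closedBall (div_le_self hr.le (one_le_pow₀ hq.le)) ht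
  rw [hball] at ht_mem ⊢
  exact (hmaxF t (closedBall_subset_closedBall hrad ht)).eq_biSup_of_nonneg
    (fun _ => norm_nonneg _) ht_mem

/-- Over a nonarchimedean local field `K` with residue field of cardinality `q`
(equivalently, with value group `q^ℤ`), for all positive `N, d` there is `m`, depending
only on `N`, `d` and `q`, such that for every polynomial map `F : K^N → K^M` of degree
at most `d` and every ball `B` of radius `r`, there is `t₀ ∈ B` with
`|F(t)| = sup_{s ∈ B} |F(s)|` for all `t` in the ball of radius `r / q^m` around `t₀`. -/
theorem polymap_norm_attains_sup_on_subball
    {K : Type*} [NontriviallyNormedField K] [IsUltrametricDist K]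
    [CompleteSpace K] [LocallyCompactSpace K]
    (q : ℝ) (hq : 1 < q)
    (hval : ∀ x : K, x ≠ 0 → ∃ n : ℤ, ‖x‖ = q ^ n)
    (N d : ℕ) (hN : 0 < N) (hd : 0 < d) :
    ∃ m : ℕ, ∀ M : ℕ, 0 < M →
      ∀ F : (Fin N → K) → (Fin M → K), IsPolyMapOfDeg K N M d F →
      ∀ (c : Fin N → K) (r : ℝ), 0 < r →
      ∃ t₀ ∈ closedBall c r, ∀ t ∈ closedBall t₀ (r / q ^ m),
        ‖F t‖ = ⨆ s ∈ closedBall c r, ‖F s‖ :=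
  polymap_norm_attains_sup_on_subball_general q hq N d
end
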